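/- Let 𝕂 be a field, let C = (C_m →^{∂_m} C_{m−1} → ⋯ →^{∂_1} C_0) be a chain complex of finite-dimensional 𝕂-vector spaces, let c = (c_m,…,c_0) be a complex basis of C and h = (h_m,…,h_0) a homology basis of C. Then the scalar τ(C;c,h) = ∏_{i=0}^m [(b_i h_i) b_{i−1}/c_i]^{(−1)^{i+1}} ∈ 𝕂* does not depend on the choice of the bases b_0, …, b_{m−1} of the boundary spaces B_0(C), …, B_{m−1}(C): any two such choices yield the same value of the product. -/

import Mathlib

/-!
In degree `i`, the family `(b'_i, h̃'_i, b̃'_{i-1})` is obtained from `(b_i, h̃_i, b̃_{i-1})` by a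
block-triangular matrix: `b'_i` is a combination of `b_i`; `h̃'_i - h̃_i` is a boundary; and
`b̃'_{i-1}` minus the matching combination of `b̃_{i-1}` is a cycle, hence a combination of
`b_i` and `h̃_i`. Its diagonal blocks are `[b'_i/b_i]`, the identity and `[b'_{i-1}/b_{i-1}]`,
so the `i`-th determinant is multiplied by `[b'_i/b_i] [b'_{i-1}/b_{i-1}]`. In the alternating
product each `[b'_i/b_i]` then occurs with exponents `(-1)^(i+1)` and `(-1)^(i+2)` and cancels,
while the end factors are `1` because `B_{-1}(C) = B_m(C) = 0`.
-/

/-- The boundary maps of a chain complex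
`C = (C_m →^{∂_m} C_{m-1} → ⋯ →^{∂_1} C_0)` (given by the maps
`δ i = ∂_{i+1} : C_{i+1} → C_i`), repackaged paper-style with the convention
`∂_0 = 0` : `paperBoundary δ j : C j →ₗ C (j-1)` is `δ (j-1) = ∂_j` for `j ≥ 1`
and `0` for `j = 0`.  In particular `Z_i(C) = ker (paperBoundary δ i)` and
`B_i(C) = range (paperBoundary δ (i+1))`. -/
def paperBoundary {𝕂 : Type*} [Field 𝕂] {C : ℕ → Type*} [∀ i, AddCommGroup (C i)]
    [∀ i, Module 𝕂 (C i)] (δ : ∀ i : ℕ, C (i + 1) →ₗ[𝕂] C i) :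
    ∀ j : ℕ, C j →ₗ[𝕂] C (j - 1)
  | 0 => 0
  | j + 1 => δ j

open Set Submodule

namespace Module.Basis

variable {R V : Type*} [CommRing R] [AddCommGroup V] [Module R V]

theorem det_eq_det_mul_det_of_eq_sum {ι : Type*} [Fintype ι] [DecidableEq ι]
    (e : Basis ι R V) {v w : ι → V} (M : Matrix ι ι R) (hw : ∀ k, w k = ∑ l, M l k • v l) :
    e.det w = e.det v * M.det := by
  have hmat : e.toMatrix w = e.toMatrix v * M := by
    ext r k
    simp [toMatrix_apply, hw, Matrix.mul_apply, mul_comm]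
  rw [det_apply, det_apply, hmat, Matrix.det_mul]

theorem det_eq_one_of_subsingleton [Nontrivial R] [Subsingleton V] {ι : Type*} [Fintype ι]
    [DecidableEq ι] (b b' : Basis ι R V) : b.det b' = 1 := by
  have : IsEmpty ι := ⟨fun i => b.ne_zero i (Subsingleton.elim _ _)⟩
  rw [det_apply, Matrix.det_isEmpty]

theorem coe_eq_sum_toMatrix {ι ι' : Type*} [Fintype ι] {P : Submodule R V} (b : Basis ι R P)
    (w : ι' → P) (i : ι') : (w i : V) = ∑ j, b.toMatrix w j i • (b j : V) := by
  conv_lhs => rw [← b.sum_repr (w i)]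
  simp only [Submodule.coe_sum, Submodule.coe_smul, toMatrix_apply]

theorem span_range_coe {ι : Type*} {P : Submodule R V} (b : Basis ι R P) :
    span R (range fun i => (b i : V)) = P := by
  rw [range_comp']
  change span R (P.subtype '' _) = P
  rw [span_image, b.span_eq, Submodule.map_top, range_subtype]

variable {ι ι' : Type*} [Fintype ι] [DecidableEq ι] [Fintype ι'] [DecidableEq ι']

theorem det_sumElim_of_triangular (e : Basis (ι ⊕ ι') R V) {u u' : ι → V} {v v' : ι' → V}
    (A : Matrix ι ι R) (D : Matrix ι' ι' R) (hu : ∀ i, u' i = ∑ j, A j i • u j)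
    (hv : ∀ i, v' i - ∑ j, D j i • v j ∈ span R (range u)) :
    e.det (Sum.elim u' v') = A.det * D.det * e.det (Sum.elim u v) := by
  choose C hC using fun i => (mem_span_range_iff_exists_fun R).mp (hv i)
  have hw : ∀ k, Sum.elim u' v' k =
      ∑ l, Matrix.fromBlocks A (Matrix.of fun j i => C i j) 0 D l k • Sum.elim u v l := by
    rintro (i | i)
    · simp [hu]
    · simp only [Sum.elim_inl, Sum.elim_inr, Fintype.sum_sum_type, Matrix.fromBlocks_apply₁₂,
        Matrix.fromBlocks_apply₂₂, Matrix.of_apply, hC i, sub_add_cancel]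
  rw [e.det_eq_det_mul_det_of_eq_sum _ hw, Matrix.det_fromBlocks_zero₂₁, mul_comm]

theorem det_sumElim_sumElim_of_triangular {ι₂ : Type*} [Fintype ι₂] [DecidableEq ι₂]
    (e : Basis ((ι ⊕ ι₂) ⊕ ι') R V) {x x' : ι → V} {y y' : ι₂ → V} {z z' : ι' → V}
    (A : Matrix ι ι R) (D : Matrix ι' ι' R) (hx : ∀ i, x' i = ∑ j, A j i • x j)
    (hy : ∀ i, y' i - y i ∈ span R (range x))
    (hz : ∀ i, z' i - ∑ j, D j i • z j ∈ span R (range (Sum.elim x y))) :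
    e.det (Sum.elim (Sum.elim x' y') z') = A.det * D.det * e.det (Sum.elim (Sum.elim x y) z) := by
  choose E hE using fun i => (mem_span_range_iff_exists_fun R).mp (hy i)
  have hxy : ∀ k, Sum.elim x' y' k =
      ∑ l, Matrix.fromBlocks A (Matrix.of fun j i => E i j) 0 1 l k • Sum.elim x y l := by
    rintro (i | i)
    · simp [hx]
    · simp [hE i, Matrix.one_apply]
  rw [e.det_sumElim_of_triangular _ D hxy hz, Matrix.det_fromBlocks_zero₂₁, Matrix.det_one,
    mul_one]

end Module.Basis

section

variable {R V : Type*} [CommRing R] [AddCommGroup V] [Module R V]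

theorem Submodule.le_sup_span_of_basis_quotient {ι : Type*} [Fintype ι] {Z B : Submodule R V}
    (h : Module.Basis ι R (Z ⧸ B.comap Z.subtype)) {y : ι → V} (hyZ : ∀ j, y j ∈ Z)
    (hy : ∀ j, h j = Quotient.mk ⟨y j, hyZ j⟩) : Z ≤ B ⊔ span R (range y) := by
  intro z hz
  set c := h.repr (Quotient.mk ⟨z, hz⟩)
  have hclass : (B.comap Z.subtype).mkQ ⟨z, hz⟩ =
      (B.comap Z.subtype).mkQ (∑ j, c j • ⟨y j, hyZ j⟩) := by
    simp only [map_sum, map_smul, mkQ_apply, ← hy, c, h.sum_repr]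
  rw [mkQ_apply, mkQ_apply, Quotient.eq, mem_comap] at hclass
  have hsum : ∑ j, c j • y j ∈ span R (range y) :=
    sum_mem fun j _ => smul_mem _ _ (subset_span (mem_range_self j))
  simpa using add_mem_sup hclass hsum

theorem det_boundary_homology_lift_basis_change {W κ₁ κ₀ ι : Type*} [AddCommGroup W]
    [Module R W] [Fintype κ₁] [DecidableEq κ₁] [Fintype κ₀] [DecidableEq κ₀] [Fintype ι]
    [DecidableEq ι] (d : V →ₗ[R] W) (B : Submodule R V) (c : Module.Basis ((κ₁ ⊕ ι) ⊕ κ₀) R V)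
    (h : Module.Basis ι R (LinearMap.ker d ⧸ B.comap (LinearMap.ker d).subtype))
    (bB bB' : Module.Basis κ₁ R B) (bP bP' : Module.Basis κ₀ R (LinearMap.range d))
    {ht ht' : ι → V} (hZ : ∀ j, ht j ∈ LinearMap.ker d) (hZ' : ∀ j, ht' j ∈ LinearMap.ker d)
    (hh : ∀ j, h j = Submodule.Quotient.mk ⟨ht j, hZ j⟩)
    (hh' : ∀ j, h j = Submodule.Quotient.mk ⟨ht' j, hZ' j⟩)
    {bt bt' : κ₀ → V} (hbt : ∀ j, d (bt j) = bP j) (hbt' : ∀ j, d (bt' j) = bP' j) :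
    c.det (Sum.elim (Sum.elim (fun j => (bB' j : V)) ht') bt') =
      bB.det bB' * bP.det bP' * c.det (Sum.elim (Sum.elim (fun j => (bB j : V)) ht) bt) := by
  rw [bB.det_apply, bP.det_apply]
  refine c.det_sumElim_sumElim_of_triangular _ _ (bB.coe_eq_sum_toMatrix bB') (fun j => ?_)
    (fun j => ?_)
  · have hclass := (hh j).symm.trans (hh' j)
    rw [Submodule.Quotient.eq, mem_comap] at hclass
    rw [bB.span_range_coe]
    simpa using neg_mem hclass
  · rw [Sum.elim_range, span_union, bB.span_range_coe]
    refine le_sup_span_of_basis_quotient h hZ hh ?_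
    rw [LinearMap.mem_ker, map_sub, map_sum, hbt', bP.coe_eq_sum_toMatrix bP' j]
    simp [hbt]

end

theorem prod_range_zpow_neg_one_pow_mul_succ {G : Type*} [CommGroupWithZero G] (f : ℕ → G)
    (hf : ∀ i, f i ≠ 0) (n : ℕ) :
    ∏ i ∈ Finset.range n, (f (i + 1) * f i) ^ ((-1 : ℤ) ^ (i + 1)) =
      f n ^ ((-1 : ℤ) ^ n) / f 0 := by
  induction n with
  | zero => simp [hf 0]
  | succ n ih =>
    rw [Finset.prod_range_succ, ih, pow_succ, mul_neg_one, mul_zpow, zpow_neg, zpow_neg]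
    have := zpow_ne_zero ((-1 : ℤ) ^ n) (hf n)
    field_simp

-- `b i` is a basis of `B_{i-1}(C) = im ∂_i`, so the paper's `b_i` is `b (i + 1)`.
theorem stmt_2_general {𝕂 : Type*} [Field 𝕂] (m : ℕ)
    (C : ℕ → Type*) [∀ i, AddCommGroup (C i)] [∀ i, Module 𝕂 (C i)]
    (δ : ∀ i : ℕ, C (i + 1) →ₗ[𝕂] C i)
    (hzero : ∀ i, m ≤ i → δ i = 0)
    (κ ιh : ℕ → Type)
    [∀ i, Fintype (κ i)] [∀ i, DecidableEq (κ i)]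
    [∀ i, Fintype (ιh i)] [∀ i, DecidableEq (ιh i)]
    -- the complex basis `c` and the homology basis `h`
    (c : ∀ i, Module.Basis ((κ (i + 1) ⊕ ιh i) ⊕ κ i) 𝕂 (C i))
    (h : ∀ i, Module.Basis (ιh i) 𝕂
      (↥(LinearMap.ker (paperBoundary δ i)) ⧸
        Submodule.comap (LinearMap.ker (paperBoundary δ i)).subtype
          (LinearMap.range (paperBoundary δ (i + 1)))))
    -- first choice of boundary bases and lifts
    (b : ∀ i, Module.Basis (κ i) 𝕂 (LinearMap.range (paperBoundary δ i)))
    (htil : ∀ i, ιh i → C i)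
    (hZ : ∀ i j, htil i j ∈ LinearMap.ker (paperBoundary δ i))
    (hh : ∀ i j, h i j = Submodule.Quotient.mk ⟨htil i j, hZ i j⟩)
    (btil : ∀ i, κ i → C i)
    (hbtil : ∀ i j, paperBoundary δ i (btil i j) = (b i j : C (i - 1)))
    -- second choice of boundary bases and lifts
    (b' : ∀ i, Module.Basis (κ i) 𝕂 (LinearMap.range (paperBoundary δ i)))
    (htil' : ∀ i, ιh i → C i)
    (hZ' : ∀ i j, htil' i j ∈ LinearMap.ker (paperBoundary δ i))
    (hh' : ∀ i j, h i j = Submodule.Quotient.mk ⟨htil' i j, hZ' i j⟩)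
    (btil' : ∀ i, κ i → C i)
    (hbtil' : ∀ i j, paperBoundary δ i (btil' i j) = (b' i j : C (i - 1))) :
    ∏ i ∈ Finset.range (m + 1),
        ((c i).det (Sum.elim (Sum.elim (fun j => ((b (i + 1) j).1 : C i)) (htil i)) (btil i)))
          ^ ((-1 : ℤ) ^ (i + 1))
      = ∏ i ∈ Finset.range (m + 1),
        ((c i).det (Sum.elim (Sum.elim (fun j => ((b' (i + 1) j).1 : C i)) (htil' i)) (btil' i)))
          ^ ((-1 : ℤ) ^ (i + 1)) := by
  set p : ℕ → 𝕂 := fun i => (b i).det (b' i)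
  have hstep : ∀ i,
      (c i).det (Sum.elim (Sum.elim (fun j => ((b' (i + 1) j).1 : C i)) (htil' i)) (btil' i)) =
        p (i + 1) * p i *
          (c i).det (Sum.elim (Sum.elim (fun j => ((b (i + 1) j).1 : C i)) (htil i)) (btil i)) :=
    fun i => det_boundary_homology_lift_basis_change _ _ (c i) (h i) _ _ (b i) (b' i) (hZ i)
      (hZ' i) (hh i) (hh' i) (hbtil i) (hbtil' i)
  have hp0 : p 0 = 1 := by
    have : Subsingleton (LinearMap.range (paperBoundary δ 0)) :=
      subsingleton_iff_eq_bot.mpr LinearMap.range_zero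
    exact Module.Basis.det_eq_one_of_subsingleton _ _
  have hpm : p (m + 1) = 1 := by
    have : Subsingleton (LinearMap.range (paperBoundary δ (m + 1))) :=
      subsingleton_iff_eq_bot.mpr (LinearMap.range_eq_bot.mpr (hzero m le_rfl))
    exact Module.Basis.det_eq_one_of_subsingleton _ _
  have hp : ∀ i, p i ≠ 0 := fun i => ((b i).isUnit_det (b' i)).ne_zero
  symm
  rw [Finset.prod_congr rfl fun i _ => by rw [hstep i, mul_zpow (p (i + 1) * p i)],
    Finset.prod_mul_distrib, prod_range_zpow_neg_one_pow_mul_succ p hp, hp0, hpm]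
  simp

/-- Let `𝕂` be a field, `C = (C_m → ⋯ → C_0)` a chain complex of
finite-dimensional `𝕂`-vector spaces, `c = (c_m, …, c_0)` a complex basis of `C` and
`h = (h_m, …, h_0)` a homology basis of `C`.  Then the scalar
`τ(C; c, h) = ∏_{i=0}^m [(b_i h_i) b_{i-1}/c_i]^{(-1)^{i+1}} ∈ 𝕂*` does not depend on
the choice of the bases `b_0, …, b_{m-1}` of the boundary spaces `B_0(C), …, B_{m-1}(C)`
(nor on the chosen lifts): any two such choices yield the same value of the product.
Here, for each `i`, `b i` is a basis of `B_{i-1}(C) = im ∂_i`, `btil i` is a family of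
elements of `C_i` mapped bijectively by `∂_i` onto `b i`, and `htil i` is a family of
cycles in `Z_i(C) = ker ∂_i` whose classes form the basis `h i` of `H_i(C)`; the
determinant `[(b_i h_i) b_{i-1}/c_i]` is computed in the basis `c i` of `C_i`. -/
theorem stmt_2 {𝕂 : Type*} [Field 𝕂] (m : ℕ)
    (C : ℕ → Type*) [∀ i, AddCommGroup (C i)] [∀ i, Module 𝕂 (C i)]
    [∀ i, FiniteDimensional 𝕂 (C i)]
    (δ : ∀ i : ℕ, C (i + 1) →ₗ[𝕂] C i)
    (hcomplex : ∀ i, (δ i).comp (δ (i + 1)) = 0)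
    (hzero : ∀ i, m ≤ i → δ i = 0)
    (κ ιh : ℕ → Type)
    [∀ i, Fintype (κ i)] [∀ i, DecidableEq (κ i)]
    [∀ i, Fintype (ιh i)] [∀ i, DecidableEq (ιh i)]
    -- the complex basis `c` and the homology basis `h`
    (c : ∀ i, Module.Basis ((κ (i + 1) ⊕ ιh i) ⊕ κ i) 𝕂 (C i))
    (h : ∀ i, Module.Basis (ιh i) 𝕂
      (↥(LinearMap.ker (paperBoundary δ i)) ⧸
        Submodule.comap (LinearMap.ker (paperBoundary δ i)).subtype
          (LinearMap.range (paperBoundary δ (i + 1)))))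
    -- first choice of boundary bases and lifts
    (b : ∀ i, Module.Basis (κ i) 𝕂 (LinearMap.range (paperBoundary δ i)))
    (htil : ∀ i, ιh i → C i)
    (hZ : ∀ i j, htil i j ∈ LinearMap.ker (paperBoundary δ i))
    (hh : ∀ i j, h i j = Submodule.Quotient.mk ⟨htil i j, hZ i j⟩)
    (btil : ∀ i, κ i → C i)
    (hbtil : ∀ i j, paperBoundary δ i (btil i j) = (b i j : C (i - 1)))
    -- second choice of boundary bases and lifts
    (b' : ∀ i, Module.Basis (κ i) 𝕂 (LinearMap.range (paperBoundary δ i)))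
    (htil' : ∀ i, ιh i → C i)
    (hZ' : ∀ i j, htil' i j ∈ LinearMap.ker (paperBoundary δ i))
    (hh' : ∀ i j, h i j = Submodule.Quotient.mk ⟨htil' i j, hZ' i j⟩)
    (btil' : ∀ i, κ i → C i)
    (hbtil' : ∀ i j, paperBoundary δ i (btil' i j) = (b' i j : C (i - 1))) :
    ∏ i ∈ Finset.range (m + 1),
        ((c i).det (Sum.elim (Sum.elim (fun j => ((b (i + 1) j).1 : C i)) (htil i)) (btil i)))
          ^ ((-1 : ℤ) ^ (i + 1))
      = ∏ i ∈ Finset.range (m + 1),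
        ((c i).det (Sum.elim (Sum.elim (fun j => ((b' (i + 1) j).1 : C i)) (htil' i)) (btil' i)))
          ^ ((-1 : ℤ) ^ (i + 1)) :=
  stmt_2_general m C δ hzero κ ιh c h b htil hZ hh btil hbtil b' htil' hZ' hh' btil' hbtil'
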